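/- arXiv:2308.04307 — 5 statements merged into one kernel-verified Lean document; each statement's English description precedes it below -/
import Mathlib

section
/- Let n and g be odd integers with 3 ≤ g ≤ n, and let H = (h_0, h_1, ..., h_{n-1}) be a Hamiltonian cycle on vertex set Z_n. Then the 0-projection P_0 = (0_{h_0}, 1_{h_1}, ..., (g-1)_{h_{g-1}}, 0_{h_g}, 1_{h_{g+1}}, 0_{h_{g+2}}, 1_{h_{g+3}}, ..., 1_{h_{n-1}}) is a cycle of length n in the graph C_g[n]. -/
/-!
The 0-projection is the image of the standard cycle of `cycleGraph n` under
`k ↦ projVert g n h k`. This map is injective because `h` is, and it sends cyclically consecutive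
indices to adjacent vertices: the part index climbs `0, 1, …, g - 1`, returns to `0` since `g = 0`
in `Z_g`, and then alternates between `0` and `1`; as `n - g` is even, the last vertex lies in
part `1`, adjacent to the first vertex in part `0`.
-/

/-- The graph `C_g[n]`: vertex set `Z_g × Z_n`, edges `(i,x)(i+1,y)`. -/
def cycleBlowUp (g n : ℕ) : SimpleGraph (ZMod g × ZMod n) where
  Adj p q := p.1 ≠ q.1 ∧ (p.1 = q.1 + 1 ∨ q.1 = p.1 + 1)
  symm := ⟨fun _ _ h => ⟨fun e => h.1 e.symm, h.2.symm⟩⟩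
  loopless := ⟨fun _ h => h.1 rfl⟩

/-- The vertex sequence of the 0-projection of the Hamiltonian cycle
`(h 0, h 1, …, h (n-1))` onto `C_g[n]`: the `k`-th vertex is in part `k` for
`k < g`, and thereafter alternates between parts `0` and `1`. -/
def projVert (g n : ℕ) (h : Fin n → ZMod n) (k : Fin n) : ZMod g × ZMod n :=
  (if (k : ℕ) < g then ((k : ℕ) : ZMod g)
   else if ((k : ℕ) - g) % 2 = 0 then 0 else 1, h k)

namespace SimpleGraph

variable {V : Type*} {G : SimpleGraph V}

def cycleGraph.homOfAdjSucc {n : ℕ} [NeZero n] (f : Fin n → V)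
    (hf : ∀ k, G.Adj (f k) (f (k + 1))) : cycleGraph n →g G where
  toFun := f
  map_rel' {u v} huv := by
    have succ_of_sub {a b : Fin n} (h : (a - b).val = 1) : a = b + 1 := by
      have : (1 : Fin n) = a - b :=
        Fin.ext (by rw [h, Fin.val_one']; exact Nat.mod_eq_of_lt (by omega))
      rw [this, add_sub_cancel]
    rcases cycleGraph_adj'.mp huv with h | h
    · exact succ_of_sub h ▸ (hf v).symm
    · exact succ_of_sub h ▸ hf u

theorem Hom.exists_isCycle_getVert_eq {n : ℕ} (hn : 3 ≤ n) (f : cycleGraph n →g G)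
    (hf : Function.Injective f) :
    ∃ c : G.Walk (f ⟨0, by omega⟩) (f ⟨0, by omega⟩),
      c.IsCycle ∧ c.length = n ∧ ∀ k : Fin n, c.getVert k = f k := by
  obtain ⟨m, rfl⟩ : ∃ m, n = m + 3 := ⟨n - 3, by omega⟩
  have getVert_eq (k : Fin (m + 3)) : ((cycleGraph.cycle m).reverse.map f).getVert k = f k := by
    rw [Walk.getVert_map, Walk.getVert_reverse, cycleGraph.length_cycle,
      cycleGraph.getVert_cycle (by omega)]
    congr 1
    ext
    simp only [Nat.sub_sub_self k.isLt.le, Nat.mod_eq_of_lt k.isLt]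
  exact ⟨(cycleGraph.cycle m).reverse.map f,
    (Walk.isCycle_map_iff_of_injective hf).mpr cycleGraph.isCycle_cycle.reverse, by simp,
    getVert_eq⟩

end SimpleGraph

def projPart (g k : ℕ) : ZMod g :=
  if k < g then k else if (k - g) % 2 = 0 then 0 else 1

lemma projVert_eq (g n : ℕ) (h : Fin n → ZMod n) (k : Fin n) :
    projVert g n h k = (projPart g k, h k) := rfl

lemma projPart_of_lt {g k : ℕ} (hk : k < g) : projPart g k = k := if_pos hk

lemma projPart_of_le {g k : ℕ} (hk : g ≤ k) :
    projPart g k = if (k - g) % 2 = 0 then 0 else 1 := if_neg (not_lt.mpr hk)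

@[simp] lemma projPart_zero (g : ℕ) : projPart g 0 = 0 := by
  simp [projPart]

lemma projPart_of_even {g n : ℕ} (hgn : g ≤ n) (hpar : Even (n - g)) : projPart g n = 0 := by
  rw [projPart_of_le hgn, if_pos (Nat.even_iff.mp hpar)]

lemma projPart_succ (g k : ℕ) :
    projPart g (k + 1) = projPart g k + 1 ∨ projPart g k = projPart g (k + 1) + 1 := by
  rcases lt_trichotomy (k + 1) g with hk | rfl | hk
  · left
    rw [projPart_of_lt hk, projPart_of_lt (by omega), Nat.cast_succ]
  · left
    rw [projPart_of_le le_rfl, projPart_of_lt (lt_add_one k), Nat.sub_self, ← Nat.cast_succ,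
      ZMod.natCast_self]
    rfl
  · rw [projPart_of_le hk.le, projPart_of_le (Nat.le_of_lt_succ hk)]
    rcases Nat.mod_two_eq_zero_or_one (k - g) with hpar | hpar
    · left
      rw [if_pos hpar, if_neg (by omega : (k + 1 - g) % 2 ≠ 0), zero_add]
    · right
      rw [if_neg (by omega : (k - g) % 2 ≠ 0), if_pos (by omega : (k + 1 - g) % 2 = 0), zero_add]

lemma cycleBlowUp_adj_of_fst {g n : ℕ} (hg : 1 < g) {p q : ZMod g × ZMod n}
    (h : q.1 = p.1 + 1 ∨ p.1 = q.1 + 1) : (cycleBlowUp g n).Adj p q := by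
  have : Fact (1 < g) := ⟨hg⟩
  refine ⟨?_, h.symm⟩
  rcases h with h | h <;> simp [h]

lemma projVert_adj_add_one {g n : ℕ} [NeZero n] (hg : 1 < g) (hgn : g ≤ n)
    (hpar : Even (n - g)) (h : Fin n → ZMod n) (k : Fin n) :
    (cycleBlowUp g n).Adj (projVert g n h k) (projVert g n h (k + 1)) := by
  -- `k + 1` wraps around to `0` in `Fin n`, where `projPart g` takes the same value as at `n`.
  have wrap : projPart g (k + 1 : Fin n) = projPart g (k + 1) := by
    rw [Fin.val_add, Fin.val_one', Nat.add_mod_mod]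
    rcases (show k.val + 1 < n ∨ k.val + 1 = n by omega) with hk | hk
    · rw [Nat.mod_eq_of_lt hk]
    · rw [hk, Nat.mod_self, projPart_zero, projPart_of_even hgn hpar]
  exact cycleBlowUp_adj_of_fst hg (by simpa only [projVert_eq, wrap] using projPart_succ g k)

/-- for odd `n, g` with `3 ≤ g ≤ n` and a Hamiltonian cycle `h` of the
complete (di)graph on `Z_n`, the 0-projection is a cycle of length `n` in `C_g[n]`. -/
theorem stmt_7 (g n : ℕ) (hg : Odd g) (hn : Odd n) (h3 : 3 ≤ g) (hgn : g ≤ n)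
    (h : Fin n → ZMod n) (hham : Function.Bijective h) :
    ∃ c : (cycleBlowUp g n).Walk
        (projVert g n h ⟨0, by omega⟩) (projVert g n h ⟨0, by omega⟩),
      c.IsCycle ∧ c.length = n ∧
      ∀ k : Fin n, c.getVert (k : ℕ) = projVert g n h k := by
  have : NeZero n := ⟨by omega⟩
  let f := SimpleGraph.cycleGraph.homOfAdjSucc (projVert g n h)
    (projVert_adj_add_one (by omega) hgn (Nat.Odd.sub_odd hn hg) h)
  exact f.exists_isCycle_getVert_eq (by omega) fun a b e => hham.injective (congrArg Prod.snd e)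
end

section
/- Let g, n be odd with 3 ≤ g ≤ n and let H be a Hamiltonian cycle of the complete symmetric digraph on Z_n. The set {P_0, P_1, ..., P_{g-1}} of i-projections of H onto C_g[n] (where P_i is obtained from P_0 by adding i mod g to the first coordinate of every vertex) forms a spanning 2-regular subgraph of C_g[n] whose components are all cycles of length n. -/
/-- The `k`-th vertex of the `i`-projection of the Hamiltonian cycle
`(h 0, h 1, …, h (n-1))` onto `C_g[n]` (the 0-projection shifted by `i` in the
first coordinate). -/
def projVertI (g n : ℕ) (h : ZMod n → ZMod n) (i : ZMod g) (k : ZMod n) :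
    ZMod g × ZMod n :=
  ((if (k.val : ℕ) < g then ((k.val : ℕ) : ZMod g)
     else if (k.val - g) % 2 = 0 then 0 else 1) + i, h k)

/-- The union of the `i`-projections of `h`, as a graph on `Z_g × Z_n`:
two vertices are adjacent iff they are consecutive on some `i`-projection. -/
def projGraph (g n : ℕ) (h : ZMod n → ZMod n) : SimpleGraph (ZMod g × ZMod n) where
  Adj p q := p ≠ q ∧ ∃ (i : ZMod g) (k : ZMod n),
    (p = projVertI g n h i k ∧ q = projVertI g n h i (k + 1)) ∨
    (q = projVertI g n h i k ∧ p = projVertI g n h i (k + 1))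
  symm := by
    constructor
    intro p q ⟨hpq, i, k, hk⟩
    exact ⟨hpq.symm, i, k, hk.symm⟩
  loopless := ⟨fun _ h => h.1 rfl⟩

/-!
Write the `k`-th vertex of the `i`-projection as `(layer g k.val + i, h k)`. Since `h` is a
bijection, `(i, k) ↦ P_i(k)` is a bijection of `Z_g × Z_n`, so the union of the projections is the disjoint
union of the `g` cycles `k ↦ P_i(k)`, each of length `n`. The layers `0, 1, …, g - 1, 0, 1, …, 0, 1`
of consecutive vertices differ by `±1`, also across the wrap-around from `n - 1` to `0` because
`n - g` is even; hence every edge lies in `C_g[n]`.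
-/

open Function

theorem Function.Injective.eq_iff_of_uncurry {α β γ : Type*} {f : α → β → γ}
    (hf : Injective (uncurry f)) {a a' : α} {b b' : β} : f a b = f a' b' ↔ a = a' ∧ b = b' :=
  (hf.eq_iff (a := (a, b)) (b := (a', b'))).trans Prod.mk_inj

namespace SimpleGraph

variable {V : Type*} {n : ℕ}

theorem mem_support_cycleGraph_cycle (m : ℕ) (j : Fin (m + 3)) :
    j ∈ (cycleGraph.cycle m).support := by
  have hj := j.isLt
  convert (cycleGraph.cycle m).getVert_mem_support (m + 3 - j)
  rw [cycleGraph.getVert_cycle (by omega)]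
  ext
  simp [Nat.sub_sub_self hj.le, Nat.mod_eq_of_lt hj]

theorem exists_isCycle_of_adj_add_one {G : SimpleGraph V} (hn : 3 ≤ n) {f : ZMod n → V}
    (hf : Injective f) (hadj : ∀ k, G.Adj (f k) (f (k + 1))) (k : ZMod n) :
    ∃ c : G.Walk (f k) (f k), c.IsCycle ∧ c.length = n ∧
      ∀ w, w ∈ c.support ↔ w ∈ Set.range f := by
  obtain ⟨m, rfl⟩ : ∃ m, n = m + 3 := ⟨n - 3, by omega⟩
  -- `ZMod (m + 3)` is `Fin (m + 3)` by definition, so translates of `f` map `cycleGraph` into `G`.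
  let φ : cycleGraph (m + 3) →g G :=
    { toFun := fun j : ZMod (m + 3) => f (k + j)
      map_rel' := by
        rintro (u : ZMod (m + 3)) (v : ZMod (m + 3)) (huv | huv)
        · have huv : u - v = (1 : ZMod (m + 3)) := huv
          have : k + u = k + v + 1 := by linear_combination huv
          exact this ▸ (hadj (k + v)).symm
        · have huv : v - u = (1 : ZMod (m + 3)) := huv
          have : k + v = k + u + 1 := by linear_combination huv
          exact this ▸ hadj (k + u) }
  have hφ : Injective φ := fun u v huv => by
    change @Eq (ZMod (m + 3)) u v
    exact add_left_cancel (hf huv)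
  have hφ0 : φ 0 = f k := congrArg f (add_zero k)
  refine ⟨((cycleGraph.cycle m).map φ).copy hφ0 hφ0, ?_, ?_, fun w => ?_⟩
  · exact (Walk.isCycle_copy _ _).mpr (cycleGraph.isCycle_cycle.map hφ)
  · simp [cycleGraph.length_cycle]
  · simp only [Walk.support_copy, Walk.support_map, List.mem_map, Set.mem_range]
    constructor
    · rintro ⟨j, -, rfl⟩
      exact ⟨_, rfl⟩
    · rintro ⟨l, rfl⟩
      exact ⟨l - k, mem_support_cycleGraph_cycle m _, congrArg f (add_sub_cancel k l)⟩

variable {ι : Type*}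

def ofCycles (f : ι → ZMod n → V) : SimpleGraph V where
  Adj p q := p ≠ q ∧ ∃ (i : ι) (k : ZMod n),
    (p = f i k ∧ q = f i (k + 1)) ∨ (q = f i k ∧ p = f i (k + 1))
  symm := ⟨fun _ _ ⟨hpq, i, k, hk⟩ => ⟨hpq.symm, i, k, hk.symm⟩⟩
  loopless := ⟨fun _ h => h.1 rfl⟩

section ofCycles

variable {f : ι → ZMod n → V} (hf : Injective (uncurry f))
include hf

theorem ofCycles_adj_iff [Nontrivial (ZMod n)] {i : ι} {k : ZMod n} {w : V} :
    (ofCycles f).Adj (f i k) w ↔ w = f i (k + 1) ∨ w = f i (k - 1) := by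
  constructor
  · rintro ⟨-, j, l, ⟨hkl, rfl⟩ | ⟨rfl, hkl⟩⟩
    · obtain ⟨rfl, rfl⟩ := hf.eq_iff_of_uncurry.mp hkl
      exact Or.inl rfl
    · obtain ⟨rfl, rfl⟩ := hf.eq_iff_of_uncurry.mp hkl
      exact Or.inr (by rw [add_sub_cancel_right])
  · rintro (rfl | rfl)
    · refine ⟨fun h => (one_ne_zero : (1 : ZMod n) ≠ 0) ?_, i, k, Or.inl ⟨rfl, rfl⟩⟩
      linear_combination -(hf.eq_iff_of_uncurry.mp h).2
    · refine ⟨fun h => (one_ne_zero : (1 : ZMod n) ≠ 0) ?_, i, k - 1,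
        Or.inr ⟨rfl, by rw [sub_add_cancel]⟩⟩
      linear_combination (hf.eq_iff_of_uncurry.mp h).2

theorem ncard_neighborSet_ofCycles (hn : 3 ≤ n) (i : ι) (k : ZMod n) :
    ((ofCycles f).neighborSet (f i k)).ncard = 2 := by
  have : Fact (1 < n) := ⟨by omega⟩
  have hnbr : (ofCycles f).neighborSet (f i k) = {f i (k + 1), f i (k - 1)} := by
    ext w
    exact ofCycles_adj_iff hf
  rw [hnbr]
  refine Set.ncard_pair fun h => ?_
  have h2 : ((2 : ℕ) : ZMod n) = 0 := by
    linear_combination hf.eq_iff_of_uncurry.mp h |>.2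
  rw [ZMod.natCast_eq_zero_iff] at h2
  exact absurd (Nat.le_of_dvd two_pos h2) (by omega)

theorem ofCycles_reachable_mem_range [Nontrivial (ZMod n)] {i : ι} {u w : V}
    (hu : u ∈ Set.range (f i)) (huw : (ofCycles f).Reachable u w) : w ∈ Set.range (f i) := by
  obtain ⟨p⟩ := huw
  induction p with
  | nil => exact hu
  | cons hadj _ ih =>
    obtain ⟨k, rfl⟩ := hu
    rcases (ofCycles_adj_iff hf).mp hadj with rfl | rfl <;> exact ih ⟨_, rfl⟩

theorem exists_isCycle_reachable_iff_ofCycles (hn : 3 ≤ n) (i : ι) (k : ZMod n) :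
    ∃ c : (ofCycles f).Walk (f i k) (f i k), c.IsCycle ∧ c.length = n ∧
      ∀ w, (ofCycles f).Reachable (f i k) w ↔ w ∈ c.support := by
  have : Fact (1 < n) := ⟨by omega⟩
  have hfi : Injective (f i) := fun k l hkl => (hf.eq_iff_of_uncurry.mp hkl).2
  obtain ⟨c, hc, hlen, hsupp⟩ := exists_isCycle_of_adj_add_one hn hfi
    (fun l => (ofCycles_adj_iff hf).mpr (Or.inl rfl)) k
  refine ⟨c, hc, hlen, fun w => ⟨fun hw => (hsupp w).mpr ?_, fun hw => ?_⟩⟩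
  · exact ofCycles_reachable_mem_range hf ⟨k, rfl⟩ hw
  · obtain ⟨q, -, -⟩ := Walk.mem_support_iff_exists_append.mp hw
    exact ⟨q⟩

end ofCycles

end SimpleGraph

def layer (g a : ℕ) : ZMod g :=
  if a < g then (a : ZMod g) else if (a - g) % 2 = 0 then 0 else 1

theorem projVertI_eq (g n : ℕ) (h : ZMod n → ZMod n) (i : ZMod g) (k : ZMod n) :
    projVertI g n h i k = (layer g k.val + i, h k) := rfl

theorem layer_succ (g a : ℕ) :
    layer g (a + 1) = layer g a + 1 ∨ layer g a = layer g (a + 1) + 1 := by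
  unfold layer
  rcases lt_trichotomy (a + 1) g with hlt | rfl | hgt
  · left
    rw [if_pos hlt, if_pos (show a < g by omega), Nat.cast_succ]
  · left
    rw [if_neg (lt_irrefl _), Nat.sub_self, if_pos rfl, if_pos (Nat.lt_succ_self a),
      ← Nat.cast_succ, ZMod.natCast_self]
  · rw [if_neg (show ¬a + 1 < g by omega), if_neg (show ¬a < g by omega)]
    rcases Nat.mod_two_eq_zero_or_one (a - g) with h0 | h1
    · left
      rw [if_pos h0, if_neg (show ¬(a + 1 - g) % 2 = 0 by omega), zero_add]
    · right
      rw [if_neg (show ¬(a - g) % 2 = 0 by omega), if_pos (show (a + 1 - g) % 2 = 0 by omega),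
        zero_add]

theorem layer_sub_one_of_even {g n : ℕ} (hn : 0 < n) (hgn : g ≤ n) (hpar : Even (n - g)) :
    layer g 0 = layer g (n - 1) + 1 ∨ layer g (n - 1) = layer g 0 + 1 := by
  have h0 : layer g 0 = 0 := by unfold layer; split_ifs <;> simp_all
  rw [h0]
  unfold layer
  obtain ⟨r, hr⟩ := hpar
  rcases hgn.lt_or_eq with hlt | rfl
  · right
    rw [if_neg (show ¬n - 1 < g by omega), if_neg (show ¬(n - 1 - g) % 2 = 0 by omega),
      zero_add]
  · left
    rw [if_pos (Nat.sub_lt hn one_pos), ← Nat.cast_add_one, Nat.sub_add_cancel hn,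
      ZMod.natCast_self]

theorem layer_val_add_one {g n : ℕ} [NeZero n] (hgn : g ≤ n) (hpar : Even (n - g))
    (k : ZMod n) :
    layer g (k + 1).val = layer g k.val + 1 ∨ layer g k.val = layer g (k + 1).val + 1 := by
  have hk : k + 1 = ((k.val + 1 : ℕ) : ZMod n) := by push_cast [ZMod.natCast_zmod_val]; rfl
  rcases lt_or_eq_of_le (show k.val + 1 ≤ n from k.val_lt) with hlt | heq
  · rw [hk, ZMod.val_natCast_of_lt hlt]
    exact layer_succ g k.val
  · rw [hk, heq, ZMod.natCast_self, ZMod.val_zero, show k.val = n - 1 by omega]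
    exact layer_sub_one_of_even (NeZero.pos n) hgn hpar

theorem cycleBlowUp_adj_add_right {g n : ℕ} [Nontrivial (ZMod g)] {x y : ZMod g}
    (hxy : y = x + 1 ∨ x = y + 1) (i : ZMod g) (u v : ZMod n) :
    (cycleBlowUp g n).Adj (x + i, u) (y + i, v) := by
  refine ⟨fun h => (one_ne_zero : (1 : ZMod g) ≠ 0) ?_, ?_⟩
  · change x + i = y + i at h
    rcases hxy with rfl | rfl
    · linear_combination -h
    · linear_combination h
  · rcases hxy with rfl | rfl
    · right; ring
    · left; ring

theorem projGraph_eq_ofCycles (g n : ℕ) (h : ZMod n → ZMod n) :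
    projGraph g n h = SimpleGraph.ofCycles (projVertI g n h) := rfl

theorem injective_uncurry_projVertI {g n : ℕ} {h : ZMod n → ZMod n} (hh : Injective h) :
    Injective (uncurry (projVertI g n h)) := by
  rintro ⟨i, k⟩ ⟨j, l⟩ hikl
  obtain ⟨hlayer, hkl⟩ := Prod.mk.inj hikl
  obtain rfl : k = l := hh hkl
  exact Prod.ext (add_left_cancel hlayer) rfl

theorem projGraph_le_cycleBlowUp {g n : ℕ} (hg : 1 < g) (hgn : g ≤ n) (hpar : Even (n - g))
    (h : ZMod n → ZMod n) : projGraph g n h ≤ cycleBlowUp g n := by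
  have : NeZero n := ⟨by omega⟩
  have : Fact (1 < g) := ⟨hg⟩
  have hstep (i : ZMod g) (k : ZMod n) :
      (cycleBlowUp g n).Adj (projVertI g n h i k) (projVertI g n h i (k + 1)) := by
    rw [projVertI_eq, projVertI_eq]
    exact cycleBlowUp_adj_add_right (layer_val_add_one hgn hpar k) i _ _
  rintro p q ⟨-, i, k, ⟨rfl, rfl⟩ | ⟨rfl, rfl⟩⟩
  · exact hstep i k
  · exact (hstep i k).symm

/-- for odd `g, n` with `3 ≤ g ≤ n` and a Hamiltonian cycle `h` of the
complete symmetric digraph on `Z_n`, the union of the `i`-projections of `h` onto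
`C_g[n]` is a spanning 2-regular subgraph of `C_g[n]` all of whose connected
components are cycles of length `n`. -/
theorem stmt_8 (g n : ℕ) (hg : Odd g) (hn : Odd n) (h3 : 3 ≤ g) (hgn : g ≤ n)
    (h : ZMod n → ZMod n) (hham : Function.Bijective h) :
    projGraph g n h ≤ cycleBlowUp g n ∧
    (∀ v : ZMod g × ZMod n, ((projGraph g n h).neighborSet v).ncard = 2) ∧
    (∀ v : ZMod g × ZMod n, ∃ c : (projGraph g n h).Walk v v,
      c.IsCycle ∧ c.length = n ∧
      ∀ w, (projGraph g n h).Reachable v w ↔ w ∈ c.support) := by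
  have h3n : 3 ≤ n := h3.trans hgn
  have : NeZero g := ⟨by omega⟩
  have : NeZero n := ⟨by omega⟩
  have hbij : Bijective (uncurry (projVertI g n h)) :=
    (injective_uncurry_projVertI hham.injective).bijective_of_finite
  refine ⟨projGraph_le_cycleBlowUp (by omega) hgn (Nat.Odd.sub_odd hn hg) h,
    fun v => ?_, fun v => ?_⟩
  all_goals
    obtain ⟨⟨i, k⟩, rfl⟩ := hbij.surjective v
    rw [projGraph_eq_ofCycles]
  · exact SimpleGraph.ncard_neighborSet_ofCycles hbij.injective h3n i k
  · exact SimpleGraph.exists_isCycle_reachable_iff_ofCycles hbij.injective h3n i k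
end

section
/- If a 2-regular graph H of order v admits a graceful labelling, i.e., there is a copy F of H with vertex set {0,1,...,v-1} ∪ {∞} whose list of differences ΔF equals ±{1,...,v-1} (each nonzero residue mod v appearing exactly twice after reduction), then reducing the vertex labels of F modulo v yields a twofold 2-starter of Z_v, and hence a 1-rotational solution to OP(2K_v; H). -/
/-- Translation of a vertex of `G ∪ {∞}` (encoded as `Option G`, `none = ∞`). -/
def trVert {G : Type*} [AddGroup G] (g : G) : Option G → Option G :=
  Option.map (· + g)

/-- The translate `H + g` of a graph `H` on `G ∪ {∞}`. -/
def translateGraph {G : Type*} [AddGroup G] (g : G)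
    (H : SimpleGraph (Option G)) : SimpleGraph (Option G) where
  Adj u v := H.Adj (trVert (-g) u) (trVert (-g) v)
  symm := ⟨fun _ _ h => SimpleGraph.Adj.symm h⟩
  loopless := ⟨fun _ h => H.loopless.irrefl _ h⟩

/-- The natural injection `{0, …, v-1} ∪ {∞} ↪ Z_v ∪ {∞}` reducing labels mod `v`. -/
def reduceVert (v : ℕ) [NeZero v] : Option (Fin v) ↪ Option (ZMod v) :=
  Function.Embedding.optionMap
    ⟨fun x => ((x : ℕ) : ZMod v), by
      intro a b hab
      have ha : (((a : ℕ) : ZMod v)).val = (a : ℕ) := ZMod.val_cast_of_lt a.isLt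
      have hb : (((b : ℕ) : ZMod v)).val = (b : ℕ) := ZMod.val_cast_of_lt b.isLt
      simp only at hab
      exact Fin.ext (by rw [← ha, ← hb, hab])⟩

/-
For labels `0 ≤ a, b < v`, the residue of `a - b` mod `v` is `d ≠ 0` exactly when the integer
`a - b` is `d.val` or `d.val - v`; a graceful labelling realizes each of these once (the second
as the reverse of the difference `v - d.val`), so every nonzero residue occurs twice in the
difference list of the reduced graph. Translation keeps differences, so the translates
containing `{x, y}` correspond to the edges of difference `x - y`, and those containing
`{∞, y}` to the two neighbours of `∞`.
-/
section Translate

variable {G : Type*} [AddGroup G] (H : SimpleGraph (Option G))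

-- `(diffPairs H d).ncard` is the multiplicity of `d` in the difference list `ΔH`.
def diffPairs (d : G) : Set (G × G) :=
  {p | H.Adj (some p.1) (some p.2) ∧ p.1 - p.2 = d}

def translateGraphIso (g : G) : translateGraph g H ≃g H where
  toEquiv := Equiv.optionCongr (Equiv.addRight (-g))
  map_rel_iff' := by rintro (_ | a) (_ | b) <;> rfl

variable {H}

lemma translateGraph_adj_some_some {g x y : G} :
    (translateGraph g H).Adj (some x) (some y) ↔ H.Adj (some (x - g)) (some (y - g)) := by
  simp only [sub_eq_add_neg]; rfl

lemma translateGraph_adj_none_some {g y : G} :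
    (translateGraph g H).Adj none (some y) ↔ H.Adj none (some (y - g)) := by
  simp only [sub_eq_add_neg]; rfl

lemma exists_sub_eq_and_sub_eq {x y p₁ p₂ : G} (h : p₁ - p₂ = x - y) :
    ∃ g, x - g = p₁ ∧ y - g = p₂ := by
  have hx : x - (-p₁ + x) = p₁ := sub_eq_iff_eq_add.mpr (add_neg_cancel_left p₁ x).symm
  refine ⟨-p₁ + x, hx, sub_right_injective (b := p₁) ?_⟩
  dsimp only
  rw [h, ← sub_sub_sub_cancel_right x y (-p₁ + x), hx]

lemma ncard_setOf_translateGraph_adj_some_some (x y : G) :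
    {g | (translateGraph g H).Adj (some x) (some y)}.ncard = (diffPairs H (x - y)).ncard := by
  refine Set.ncard_congr (fun g _ => (x - g, y - g)) ?_ ?_ ?_
  · intro g hg
    exact ⟨translateGraph_adj_some_some.mp hg, sub_sub_sub_cancel_right x y g⟩
  · intro a b _ _ h
    exact sub_right_injective (Prod.ext_iff.mp h).1
  · rintro ⟨p₁, p₂⟩ ⟨hadj, hdiff⟩
    obtain ⟨g, hx, hy⟩ := exists_sub_eq_and_sub_eq hdiff
    refine ⟨g, translateGraph_adj_some_some.mpr ?_, by rw [hx, hy]⟩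
    rwa [hx, hy]

lemma ncard_setOf_translateGraph_adj_none_some (y : G) :
    {g | (translateGraph g H).Adj none (some y)}.ncard = (H.neighborSet none).ncard := by
  refine Set.ncard_congr (fun g _ => some (y - g)) (fun g hg => translateGraph_adj_none_some.mp hg)
    (fun a b _ _ h => sub_right_injective (Option.some_injective _ h)) ?_
  rintro (_ | z) hz
  · exact absurd hz (H.loopless.irrefl none)
  · refine ⟨-z + y, translateGraph_adj_none_some.mpr ?_, ?_⟩ <;>
      rw [sub_eq_iff_eq_add.mpr (add_neg_cancel_left z y).symm]
    exact hz

theorem ncard_setOf_translateGraph_adj_eq_two (hnone : (H.neighborSet none).ncard = 2)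
    (hdiff : ∀ d ≠ 0, (diffPairs H d).ncard = 2) {u w : Option G} (huw : u ≠ w) :
    {g | (translateGraph g H).Adj u w}.ncard = 2 := by
  rcases u with _ | x <;> rcases w with _ | y
  · exact absurd rfl huw
  · rw [ncard_setOf_translateGraph_adj_none_some, hnone]
  · simp_rw [SimpleGraph.adj_comm _ (some x)]
    rw [ncard_setOf_translateGraph_adj_none_some, hnone]
  · rw [ncard_setOf_translateGraph_adj_some_some]
    exact hdiff _ (sub_ne_zero.mpr fun h => huw (congrArg some h))

end Translate

lemma ZMod.intCast_eq_iff_eq_val_or_eq_val_sub {v : ℕ} [NeZero v] {x : ℤ}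
    (hlo : -(v : ℤ) < x) (hhi : x < v) (d : ZMod v) :
    (x : ZMod v) = d ↔ x = d.val ∨ x = d.val - v := by
  have hval : ((d.val : ℤ) : ZMod v) = d := by simp
  have hlt : (d.val : ℤ) < v := by exact_mod_cast d.val_lt
  constructor
  · intro h
    have hdvd : (v : ℤ) ∣ x - d.val := by
      rw [← ZMod.intCast_eq_intCast_iff_dvd_sub, h, hval]
    by_cases hx : d.val - v < x
    · exact .inl <| sub_eq_zero.mp <|
        Int.eq_zero_of_abs_lt_dvd hdvd (abs_lt.mpr ⟨by omega, by omega⟩)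
    · have hdvd' : (v : ℤ) ∣ x - (d.val - v) := by
        simpa [sub_sub_eq_add_sub, add_sub_right_comm] using dvd_add hdvd (dvd_refl (v : ℤ))
      exact .inr <| sub_eq_zero.mp <|
        Int.eq_zero_of_abs_lt_dvd hdvd' (abs_lt.mpr ⟨by omega, by omega⟩)
  · rintro (rfl | rfl) <;> simp

section Graceful

variable {v : ℕ} (F : SimpleGraph (Option (Fin v)))

def labelDiffPairs (k : ℤ) : Set (Fin v × Fin v) :=
  {p | F.Adj (some p.1) (some p.2) ∧ ((p.1 : ℕ) : ℤ) - ((p.2 : ℕ) : ℤ) = k}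

lemma ncard_labelDiffPairs_neg (k : ℤ) :
    (labelDiffPairs F (-k)).ncard = (labelDiffPairs F k).ncard := by
  have : labelDiffPairs F (-k) = Prod.swap '' labelDiffPairs F k := by
    rw [Set.image_swap_eq_preimage_swap]
    ext ⟨a, b⟩
    simp only [labelDiffPairs, Set.mem_preimage, Set.mem_ofPred_eq, Prod.swap_prod_mk]
    exact and_congr (F.adj_comm _ _) (by omega)
  rw [this, Set.ncard_image_of_injective _ Prod.swap_injective]

end Graceful

lemma ncard_diffPairs_map_optionMap {α G : Type*} [AddGroup G] (F : SimpleGraph (Option α))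
    (c : α ↪ G) (d : G) :
    (diffPairs (F.map (Function.Embedding.optionMap c)) d).ncard =
      {p : α × α | F.Adj (some p.1) (some p.2) ∧ c p.1 - c p.2 = d}.ncard := by
  have : diffPairs (F.map (Function.Embedding.optionMap c)) d =
      Prod.map c c '' {p : α × α | F.Adj (some p.1) (some p.2) ∧ c p.1 - c p.2 = d} := by
    ext ⟨x, y⟩
    simp only [diffPairs, Set.mem_ofPred_eq, Set.mem_image, SimpleGraph.map_adj, Prod.exists,
      Prod.map, Prod.mk.injEq]
    constructor
    · rintro ⟨⟨_ | a, _ | b, hadj, hx, hy⟩, hd⟩ <;> cases hx <;> cases hy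
      exact ⟨a, b, ⟨hadj, hd⟩, rfl, rfl⟩
    · rintro ⟨a, b, ⟨hadj, hd⟩, rfl, rfl⟩
      exact ⟨⟨some a, some b, hadj, rfl, rfl⟩, hd⟩
  rw [this, Set.ncard_image_of_injective _ (c.injective.prodMap c.injective)]

section Reduce

variable {v : ℕ} [NeZero v] (F : SimpleGraph (Option (Fin v)))

lemma setOf_adj_natCast_sub_eq (d : ZMod v) :
    {p : Fin v × Fin v | F.Adj (some p.1) (some p.2) ∧
      ((p.1 : ℕ) : ZMod v) - ((p.2 : ℕ) : ZMod v) = d} =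
      labelDiffPairs F d.val ∪ labelDiffPairs F (d.val - v) := by
  ext ⟨a, b⟩
  have hcast :
      ((a : ℕ) : ZMod v) - ((b : ℕ) : ZMod v) = (((a : ℕ) - (b : ℕ) : ℤ) : ZMod v) := by
    push_cast; rfl
  simp only [labelDiffPairs, Set.mem_ofPred_eq, Set.mem_union, hcast, ← and_or_left]
  rw [ZMod.intCast_eq_iff_eq_val_or_eq_val_sub (by omega) (by omega)]

theorem ncard_diffPairs_map_reduceVert
    (hgraceful : ∀ k : ℤ, 1 ≤ k → k ≤ (v : ℤ) - 1 → (labelDiffPairs F k).ncard = 1)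
    {d : ZMod v} (hd : d ≠ 0) :
    (diffPairs (F.map (reduceVert v)) d).ncard = 2 := by
  have hpos : 1 ≤ (d.val : ℤ) := by exact_mod_cast ZMod.val_pos.mpr hd
  have hlt : (d.val : ℤ) < v := by exact_mod_cast d.val_lt
  have hdisj : Disjoint (labelDiffPairs F d.val) (labelDiffPairs F (d.val - v)) :=
    Set.disjoint_left.mpr fun _ h₁ h₂ => by have := h₁.2; have := h₂.2; omega
  calc (diffPairs (F.map (reduceVert v)) d).ncard
      = {p : Fin v × Fin v | F.Adj (some p.1) (some p.2) ∧
          ((p.1 : ℕ) : ZMod v) - ((p.2 : ℕ) : ZMod v) = d}.ncard :=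
        ncard_diffPairs_map_optionMap F _ d
    _ = 2 := by
      rw [setOf_adj_natCast_sub_eq, Set.ncard_union_eq hdisj, hgraceful _ hpos (by omega),
        ← ncard_labelDiffPairs_neg, hgraceful _ (by omega) (by omega)]

lemma reduceVert_bijective : Function.Bijective (reduceVert v) :=
  (Fintype.bijective_iff_injective_and_card _).mpr ⟨(reduceVert v).injective, by simp⟩

noncomputable def reduceVertIso : F.map (reduceVert v) ≃g F :=
  (SimpleGraph.Iso.map (Equiv.ofBijective _ reduceVert_bijective) F).symm

end Reduce

/-- if a 2-regular graph `H` of order `v` has a graceful labelling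
`F` on vertex set `{0,…,v-1} ∪ {∞}` (each difference `k` with `1 ≤ k ≤ v-1`
realized exactly once in each direction), then reducing labels mod `v` yields a
twofold 2-starter of `Z_v`, and hence the development of the reduced graph is a
1-rotational solution to `OP(2K_v; H)`: every pair of distinct vertices lies in
exactly two translates, each translate being isomorphic to `F`. -/
theorem stmt_13 (v : ℕ) [NeZero v]
    (F : SimpleGraph (Option (Fin v)))
    (h2 : ∀ u : Option (Fin v), (F.neighborSet u).ncard = 2)
    (hgraceful : ∀ k : ℤ, 1 ≤ k → k ≤ (v : ℤ) - 1 →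
      {p : Fin v × Fin v | F.Adj (some p.1) (some p.2) ∧
        ((p.1 : ℕ) : ℤ) - ((p.2 : ℕ) : ℤ) = k}.ncard = 1) :
    (∀ d : ZMod v, d ≠ 0 →
      {p : ZMod v × ZMod v |
        (F.map (reduceVert v)).Adj (some p.1) (some p.2) ∧ p.1 - p.2 = d}.ncard = 2) ∧
    (∀ u w : Option (ZMod v), u ≠ w →
      {g : ZMod v | (translateGraph g (F.map (reduceVert v))).Adj u w}.ncard = 2) ∧
    (∀ g : ZMod v, Nonempty (translateGraph g (F.map (reduceVert v)) ≃g F)) := by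
  have hstarter : ∀ d : ZMod v, d ≠ 0 → (diffPairs (F.map (reduceVert v)) d).ncard = 2 :=
    fun _ hd => ncard_diffPairs_map_reduceVert F hgraceful hd
  have hinfty : ((F.map (reduceVert v)).neighborSet none).ncard = 2 := by
    change ((F.map (reduceVert v)).neighborSet (reduceVert v none)).ncard = 2
    rw [SimpleGraph.neighborSet_map, Set.ncard_image_of_injective _ (reduceVert v).injective, h2]
  exact ⟨hstarter, fun _ _ huw => ncard_setOf_translateGraph_adj_eq_two hinfty hstarter huw,
    fun g => ⟨(reduceVertIso F).comp (translateGraphIso _ g)⟩⟩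
end

section
/- If v is odd, then K_v admits a decomposition into (v-1)/2 Hamiltonian cycles (Walecki's theorem). -/
/-!
Label the vertices by `∞` and the residues mod `2n`. The `i`-th Walecki cycle is
`∞, i, i + 1, i - 1, i + 2, i - 2, …, i + n, ∞`, i.e. the zigzag `0, 1, -1, 2, -2, …, n`
shifted by `i`. Consecutive zigzag terms sum to `0` or `1`, so every chord `{a, b}` of the
`i`-th cycle has `a + b ∈ {2i, 2i + 1}`, and its two spokes `{∞, a}` have `2a = 2i`. This label
determines `i < n`, so the `n` cycles are edge-disjoint; having `n (2n + 1) = (2n + 1).choose 2`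
edges in total, they cover `K_{2n+1}`.
-/

open Function

namespace SimpleGraph

variable {ι V : Type*}

def IsHamiltonianDecomposition [DecidableEq V] (F : ι → SimpleGraph V) : Prop :=
  (∀ i, ∃ (u : V) (c : (F i).Walk u u),
    c.IsHamiltonianCycle ∧ ∀ e ∈ (F i).edgeSet, e ∈ c.edges) ∧
  (∀ i j, i ≠ j → Disjoint (F i).edgeSet (F j).edgeSet) ∧
  (⨆ i, F i) = ⊤

namespace Walk

variable {G : SimpleGraph V} {u v : V}

lemma edgeSet_spanningCoe_toSubgraph (c : G.Walk u v) :
    c.toSubgraph.spanningCoe.edgeSet = c.edgeSet := by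
  rw [Subgraph.edgeSet_spanningCoe, edgeSet_toSubgraph]

def toSpanningCoe (c : G.Walk u v) : c.toSubgraph.spanningCoe.Walk u v :=
  c.transfer _ fun _ he => c.edgeSet_spanningCoe_toSubgraph ▸ he

@[simp]
lemma edges_toSpanningCoe (c : G.Walk u v) : c.toSpanningCoe.edges = c.edges :=
  edges_transfer _ _

lemma IsHamiltonianCycle.toSpanningCoe [DecidableEq V] {c : G.Walk u u}
    (hc : c.IsHamiltonianCycle) : c.toSpanningCoe.IsHamiltonianCycle := by
  rw [isHamiltonianCycle_iff_isCycle_and_support_count_tail_eq_one] at hc ⊢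
  exact ⟨hc.1.transfer _, by simpa [Walk.toSpanningCoe, support_transfer] using hc.2⟩

lemma IsTrail.ncard_edgeSet {c : G.Walk u v} (hc : c.IsTrail) : c.edgeSet.ncard = c.length := by
  classical
  rw [← coe_edges_toFinset, Set.ncard_coe_finset, List.toFinset_card_of_nodup hc.edges_nodup,
    length_edges]

end Walk

theorem iSup_eq_top_of_pairwise_disjoint_of_sum_ncard [Fintype ι] [Finite V]
    {F : ι → SimpleGraph V} (hdisj : Pairwise (Disjoint on fun i => (F i).edgeSet))
    (hsum : ∑ i, (F i).edgeSet.ncard = (Nat.card V).choose 2) : ⨆ i, F i = ⊤ := by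
  rw [← edgeSet_inj, edgeSet_iSup]
  refine Set.eq_of_subset_of_ncard_le
    (Set.iUnion_subset fun i => edgeSet_subset_edgeSet.2 le_top) ?_ (Set.toFinite _)
  rw [edgeSet_top, Sym2.ncard_diagSet_compl,
    Set.ncard_iUnion_of_finite (fun _ => Set.toFinite _) hdisj, finsum_eq_sum_of_fintype, hsum]

theorem exists_isHamiltonianCycle_top_of_bijective [DecidableEq V] {N : ℕ} [NeZero N]
    (hN : 3 ≤ N) {σ : Fin N → V} (hσ : Bijective σ) :
    ∃ c : (⊤ : SimpleGraph V).Walk (σ 0) (σ 0),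
      c.IsHamiltonianCycle ∧ ∀ e ∈ c.edges, ∃ k, e = s(σ k, σ (k + 1)) := by
  obtain ⟨m, rfl⟩ : ∃ m, N = m + 3 := ⟨N - 3, by omega⟩
  let φ : cycleGraph (m + 3) →g ⊤ := ⟨σ, fun h => hσ.injective.ne h.ne⟩
  refine ⟨(cycleGraph.cycle m).map φ, Walk.IsHamiltonianCycle.map (f := φ) hσ
    (Walk.isHamiltonianCycle_iff_isCycle_and_length_eq.2 ⟨cycleGraph.isCycle_cycle, by simp⟩),
    fun e he => ?_⟩
  rw [Walk.edges_map, List.mem_map] at he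
  obtain ⟨e', he', rfl⟩ := he
  induction e' using Sym2.ind with | h a b => ?_
  have hab : a - b = 1 ∨ b - a = 1 :=
    cycleGraph_adj.1 ((cycleGraph.cycle m).edges_subset_edgeSet he')
  rcases hab with h | h
  · obtain rfl := sub_eq_iff_eq_add'.1 h
    exact ⟨b, Sym2.eq_swap⟩
  · obtain rfl := sub_eq_iff_eq_add'.1 h
    exact ⟨a, rfl⟩

theorem exists_isHamiltonianDecomposition_of_cyclicOrders [DecidableEq V] [Fintype ι]
    [Fintype V] {N : ℕ} [NeZero N] (hN : 3 ≤ N) (σ : ι → Fin N → V) (hσ : ∀ i, Bijective (σ i))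
    (κ : Sym2 V → ι) (hκ : ∀ i k, κ s(σ i k, σ i (k + 1)) = i)
    (hcard : Fintype.card ι * Fintype.card V = (Fintype.card V).choose 2) :
    ∃ F : ι → SimpleGraph V, IsHamiltonianDecomposition F := by
  choose c hc hedges using fun i => exists_isHamiltonianCycle_top_of_bijective hN (hσ i)
  have hκc : ∀ i, ∀ e ∈ (c i).edges, κ e = i := fun i e he => by
    obtain ⟨k, rfl⟩ := hedges i e he
    exact hκ i k
  have hdisj : Pairwise (Disjoint on fun i => (c i).toSubgraph.spanningCoe.edgeSet) :=
    fun i j hij => by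
      simp only [onFun, Walk.edgeSet_spanningCoe_toSubgraph]
      exact Set.disjoint_left.2 fun e hi hj => hij ((hκc i e hi).symm.trans (hκc j e hj))
  refine ⟨fun i => (c i).toSubgraph.spanningCoe, fun i => ⟨_, (c i).toSpanningCoe,
    (hc i).toSpanningCoe, fun e he => ?_⟩, fun i j => @hdisj i j, ?_⟩
  · rw [Walk.edgeSet_spanningCoe_toSubgraph] at he
    simpa using he
  · refine iSup_eq_top_of_pairwise_disjoint_of_sum_ncard hdisj ?_
    simp only [Walk.edgeSet_spanningCoe_toSubgraph, (hc _).isCycle.isTrail.ncard_edgeSet,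
      (hc _).length_eq, Nat.card_eq_fintype_card]
    simp [hcard]

end SimpleGraph

open SimpleGraph

def zigzag (k : ℕ) : ℤ := if k % 2 = 0 then -(k / 2 : ℕ) else ((k + 1) / 2 : ℕ)

lemma zigzag_add_zigzag_succ (k : ℕ) :
    zigzag k + zigzag (k + 1) = if k % 2 = 0 then 1 else 0 := by
  unfold zigzag; split_ifs <;> omega

lemma zigzag_two_mul_sub_one {n : ℕ} (hn : 0 < n) : zigzag (2 * n - 1) = n := by
  unfold zigzag; split_ifs <;> omega

lemma zigzag_injective : Injective zigzag := by
  intro a b h; unfold zigzag at h; split_ifs at h <;> omega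

lemma injOn_zigzag_cast (n : ℕ) :
    Set.InjOn (fun k => (zigzag k : ZMod (2 * n))) (Set.Iio (2 * n)) := by
  intro a ha b hb h
  simp only [Set.mem_Iio] at ha hb
  rw [ZMod.intCast_eq_intCast_iff_dvd_sub] at h
  refine zigzag_injective (sub_eq_zero.1 (Int.eq_zero_of_abs_lt_dvd h ?_)).symm
  -- `zigzag` maps `[0, 2n)` into the window `(-n, n]` of `2n` consecutive integers
  rw [abs_lt]; unfold zigzag; split_ifs <;> omega

def waleckiOrder (n : ℕ) (a : ZMod (2 * n)) (k : Fin (2 * n + 1)) : Option (ZMod (2 * n)) :=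
  if k.val = 0 then none else some (a + zigzag (k.val - 1))

lemma waleckiOrder_injective {n : ℕ} (a : ZMod (2 * n)) : Injective (waleckiOrder n a) := by
  intro k l h
  unfold waleckiOrder at h
  split_ifs at h with hk hl hl
  · exact Fin.ext (hk.trans hl.symm)
  · have := injOn_zigzag_cast n (by simp; omega) (by simp; omega)
      (add_left_cancel (Option.some_injective _ h))
    exact Fin.ext (by omega)

lemma waleckiOrder_bijective {n : ℕ} [NeZero n] (a : ZMod (2 * n)) :
    Bijective (waleckiOrder n a) :=
  (Fintype.bijective_iff_injective_and_card _).2 ⟨waleckiOrder_injective a, by simp [ZMod.card]⟩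

/-- A spoke `{∞, a}` is labelled like the degenerate chord `{a, a}`. -/
def waleckiLabel {m : ℕ} : Option (ZMod m) → Option (ZMod m) → ZMod m
  | some a, some b => a + b
  | some a, none | none, some a => 2 * a
  | none, none => 0

lemma waleckiLabel_comm {m : ℕ} (x y : Option (ZMod m)) :
    waleckiLabel x y = waleckiLabel y x := by
  cases x <;> cases y <;> simp [waleckiLabel, add_comm]

lemma waleckiLabel_waleckiOrder {n : ℕ} (hn : 0 < n) (a : ZMod (2 * n)) (k : Fin (2 * n + 1)) :
    ∃ δ : ℕ, δ ≤ 1 ∧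
      waleckiLabel (waleckiOrder n a k) (waleckiOrder n a (k + 1)) = 2 * a + δ := by
  unfold waleckiOrder
  rw [Fin.val_add_one]
  by_cases hlast : k = Fin.last (2 * n)
  · refine ⟨0, zero_le_one, ?_⟩
    simp only [hlast, if_true, Fin.val_last, zigzag_two_mul_sub_one hn]
    have h2n : 2 * n ≠ 0 := by omega
    simp only [h2n, if_false, waleckiLabel, Int.cast_natCast, Nat.cast_zero, add_zero, mul_add,
      add_eq_left]
    exact_mod_cast ZMod.natCast_self (2 * n)
  · rw [if_neg hlast, if_neg (Nat.succ_ne_zero _)]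
    rcases Nat.eq_zero_or_pos k.val with hk | hk
    · refine ⟨0, zero_le_one, ?_⟩
      simp [hk, waleckiLabel, zigzag]
    · refine ⟨if (k.val - 1) % 2 = 0 then 1 else 0, by split_ifs <;> simp, ?_⟩
      have := zigzag_add_zigzag_succ (k.val - 1)
      rw [Nat.sub_add_cancel hk] at this
      simp only [hk.ne', if_false, waleckiLabel, Nat.add_sub_cancel]
      rw [show a + ↑(zigzag (k.val - 1)) + (a + ↑(zigzag k.val)) =
        2 * a + ((zigzag (k.val - 1) + zigzag k.val : ℤ) : ZMod (2 * n)) by push_cast; ring, this]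
      split_ifs <;> simp

theorem exists_isHamiltonianDecomposition_walecki {V : Type*} [DecidableEq V] [Fintype V]
    (n : ℕ) [NeZero n] (e : Option (ZMod (2 * n)) ≃ V) :
    ∃ F : Fin n → SimpleGraph V, IsHamiltonianDecomposition F := by
  have hn := NeZero.pos n
  refine exists_isHamiltonianDecomposition_of_cyclicOrders (N := 2 * n + 1) (by omega)
    (fun i => e ∘ waleckiOrder n (i : ℕ)) (fun i => e.bijective.comp (waleckiOrder_bijective _))
    (fun s => ⟨(Sym2.lift ⟨waleckiLabel, waleckiLabel_comm⟩ (s.map e.symm)).val / 2,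
      Nat.div_lt_of_lt_mul (ZMod.val_lt _)⟩) (fun i k => ?_) ?_
  · obtain ⟨δ, hδ, h⟩ := waleckiLabel_waleckiOrder hn ((i : ℕ) : ZMod (2 * n)) k
    ext
    simp only [comp_apply, Sym2.map_mk, Equiv.symm_apply_apply, Sym2.lift_mk, h]
    rw [show 2 * ((i : ℕ) : ZMod (2 * n)) + δ = ((2 * i + δ : ℕ) : ZMod (2 * n)) by
      push_cast; ring, ZMod.val_cast_of_lt (by omega)]
    omega
  · rw [← Fintype.card_congr e, Fintype.card_option, ZMod.card, Nat.choose_two_right,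
      Nat.add_sub_cancel, mul_left_comm, Nat.mul_div_cancel_left _ two_pos, mul_comm,
      Fintype.card_fin]

/-- Walecki: if `v` is odd, then `K_v` decomposes into `(v-1)/2`
Hamiltonian cycles. -/
theorem stmt_15 (v : ℕ) (hv : Odd v) :
    ∃ F : Fin ((v - 1) / 2) → SimpleGraph (Fin v),
      (∀ i, ∃ (u : Fin v) (c : (F i).Walk u u),
        c.IsHamiltonianCycle ∧ ∀ e ∈ (F i).edgeSet, e ∈ c.edges) ∧
      (∀ i j, i ≠ j → Disjoint ((F i).edgeSet) ((F j).edgeSet)) ∧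
      (⨆ i, F i) = (⊤ : SimpleGraph (Fin v)) := by
  obtain ⟨n, rfl⟩ := hv
  rw [show (2 * n + 1 - 1) / 2 = n by omega]
  rcases Nat.eq_zero_or_pos n with rfl | hn
  · refine ⟨finZeroElim, finZeroElim, fun i => i.elim0, ?_⟩
    ext a b
    simp [Fin.ext (by omega : a.val = b.val)]
  · have : NeZero n := ⟨hn.ne'⟩
    exact exists_isHamiltonianDecomposition_walecki n
      (Fintype.equivFinOfCardEq (by simp [ZMod.card]))
end

section
/- If v is even, then K_v admits a decomposition into (v-2)/2 Hamiltonian cycles and one perfect matching. -/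
/-!
Label the vertices of `K_{2t+2}` by `∞ = none` and the elements of `ℤ/(2t+1)`, and give the
edge `{x, y}` the class `x + y` and the edge `{∞, x}` the class `2x`. As `2` is invertible,
every vertex has exactly one neighbour of each class, so each class is a perfect matching.
Walecki's cycle `∞, k, k+1, k-1, k+2, k-2, …, k+t, k-t, ∞` alternates between the classes `2k`
and `2k+1` (the last step uses `2(k-t) = 2k+1`), hence it consists of exactly the edges of
these two classes. The classes `0, 1, …, 2t-1` thus pair up into `t` Hamiltonian cycles, and
the class `2t = -1` is the remaining perfect matching.
-/

open Function

namespace SimpleGraph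

def IsHamiltonianMatchingDecomposition {V ι : Type*} [DecidableEq V] (F : ι → SimpleGraph V)
    (M : SimpleGraph V) : Prop :=
  (∀ i, ∃ (u : V) (c : (F i).Walk u u),
    c.IsHamiltonianCycle ∧ ∀ e ∈ (F i).edgeSet, e ∈ c.edges) ∧
  (∀ x : V, (M.neighborSet x).ncard = 1) ∧
  (∀ i j, i ≠ j → Disjoint ((F i).edgeSet) ((F j).edgeSet)) ∧
  (∀ i, Disjoint ((F i).edgeSet) M.edgeSet) ∧
  M ⊔ (⨆ i, F i) = ⊤

variable {V W ι : Type*}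

theorem edgeSet_comap_equiv (e : W ≃ V) (G : SimpleGraph V) :
    (G.comap e).edgeSet = Sym2.map e ⁻¹' G.edgeSet :=
  Set.ext fun _ => (Iso.comap e G).map_mem_edgeSet_iff.symm

variable [DecidableEq V] [DecidableEq W]

theorem exists_isHamiltonianCycle_comap (e : W ≃ V) {G : SimpleGraph V} {u : V}
    {c : G.Walk u u} (hc : c.IsHamiltonianCycle) (hcG : ∀ d ∈ G.edgeSet, d ∈ c.edges) :
    ∃ (w : W) (c' : (G.comap e).Walk w w),
      c'.IsHamiltonianCycle ∧ ∀ d ∈ (G.comap e).edgeSet, d ∈ c'.edges := by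
  let φ := (Iso.comap e G).symm
  refine ⟨φ u, c.map φ.toHom, hc.map φ.bijective, fun d hd => ?_⟩
  rw [Walk.edges_map, show d = Sym2.map φ (Sym2.map e d) by simp [φ, Sym2.map_map, comp_def]]
  exact List.mem_map_of_mem (hcG _ (by rwa [edgeSet_comap_equiv] at hd))

theorem IsHamiltonianMatchingDecomposition.comap {F : ι → SimpleGraph V} {M : SimpleGraph V}
    (h : IsHamiltonianMatchingDecomposition F M) (e : W ≃ V) :
    IsHamiltonianMatchingDecomposition (fun i => (F i).comap e) (M.comap e) := by
  obtain ⟨hF, hM, hFF, hFM, hcover⟩ := h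
  refine ⟨fun i => ?_, fun x => ?_, fun i j hij => ?_, fun i => ?_, ?_⟩
  · obtain ⟨u, c, hc, hcG⟩ := hF i
    exact exists_isHamiltonianCycle_comap e hc hcG
  · rw [neighborSet_comap, ← e.image_symm_eq_preimage,
      Set.ncard_image_of_injective _ e.symm.injective, hM]
  · simpa only [edgeSet_comap_equiv] using (hFF i j hij).preimage (Sym2.map e)
  · simpa only [edgeSet_comap_equiv] using (hFM i).preimage (Sym2.map e)
  · ext x y
    simpa [e.injective.eq_iff] using congrArg (fun G : SimpleGraph V => G.Adj (e x) (e y)) hcover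

theorem cycleGraph.mk_mem_edges_cycle {n : ℕ} (p : Fin (n + 3)) :
    s(p, p + 1) ∈ (cycleGraph.cycle n).edges := by
  rw [Walk.mk_mem_edges_iff_exists]
  refine ⟨n + 2 - p.val, by rw [cycleGraph.length_cycle]; omega, ?_⟩
  rw [cycleGraph.getVert_cycle (by omega), cycleGraph.getVert_cycle (by omega), Sym2.eq_swap]
  have h1 : n + 3 - (n + 2 - p.val) = p.val + 1 := by omega
  have h2 : n + 3 - (n + 2 - p.val + 1) = p.val := by omega
  simp only [h1, h2, Nat.mod_eq_of_lt p.isLt]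
  congr 1

theorem cycleGraph.isHamiltonianCycle_cycle (n : ℕ) : (cycleGraph.cycle n).IsHamiltonianCycle :=
  Walk.isHamiltonianCycle_iff_isCycle_and_length_eq.mpr ⟨cycleGraph.isCycle_cycle, by simp⟩

theorem exists_isHamiltonianCycle_of_bijective {G : SimpleGraph V} {n : ℕ} [NeZero n]
    (hn : 3 ≤ n) {ρ : Fin n → V} (hρ : Bijective ρ) (hadj : ∀ p, G.Adj (ρ p) (ρ (p + 1)))
    (hedge : ∀ d ∈ G.edgeSet, ∃ p, d = s(ρ p, ρ (p + 1))) :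
    ∃ (u : V) (c : G.Walk u u), c.IsHamiltonianCycle ∧ ∀ d ∈ G.edgeSet, d ∈ c.edges := by
  obtain ⟨m, rfl⟩ : ∃ m, n = m + 3 := ⟨n - 3, by omega⟩
  let f : cycleGraph (m + 3) →g G :=
    ⟨ρ, fun {p q} h => by
      rcases (cycleGraph_adj (n := m + 1)).mp h with h | h
      · rw [eq_add_of_sub_eq' h]; exact (hadj q).symm
      · rw [eq_add_of_sub_eq' h]; exact hadj p⟩
  refine ⟨ρ 0, (cycleGraph.cycle m).map f, (cycleGraph.isHamiltonianCycle_cycle m).map hρ,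
    fun d hd => ?_⟩
  obtain ⟨p, rfl⟩ := hedge d hd
  rw [Walk.edges_map]
  exact List.mem_map_of_mem (f := Sym2.map f) (cycleGraph.mk_mem_edges_cycle p)

end SimpleGraph

theorem Fin.val_add_one_mod_two {n : ℕ} (p : Fin (2 * n + 2)) :
    (p + 1).val % 2 = (p.val + 1) % 2 := by
  rw [Fin.val_add_one]
  split_ifs with hp
  · rw [hp, Fin.val_last]
    omega
  · rfl

namespace Walecki

open SimpleGraph

variable {R : Type*} [CommRing R]

def edgeClass : Option R → Option R → R
  | some x, some y => x + y
  | some x, none | none, some x => 2 * x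
  | none, none => 0 -- junk: `classGraph` only reads `edgeClass a b` for `a ≠ b`

theorem edgeClass_comm (a b : Option R) : edgeClass a b = edgeClass b a := by
  rcases a with _ | x <;> rcases b with _ | y <;> simp [edgeClass, add_comm]

theorem eq_of_edgeClass_eq (h2 : IsUnit (2 : R)) {a b c : Option R} (hb : a ≠ b) (hc : a ≠ c)
    (h : edgeClass a b = edgeClass a c) : b = c := by
  rcases a with _ | x <;> rcases b with _ | y <;> rcases c with _ | z <;>
    simp only [edgeClass, ne_eq, reduceCtorEq, not_false_eq_true, not_true_eq_false,
      Option.some.injEq, add_right_inj] at hb hc h ⊢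
  · exact h2.mul_left_cancel h
  · exact hc (by linear_combination h)
  · exact hb (by linear_combination -h)
  · exact h

theorem exists_edgeClass_eq (h2 : IsUnit (2 : R)) (a : Option R) (s : R) :
    ∃ b, a ≠ b ∧ edgeClass a b = s := by
  rcases a with _ | x
  · exact ⟨some (↑h2.unit⁻¹ * s), by simp, by simp [edgeClass, ← mul_assoc]⟩
  · by_cases hx : 2 * x = s
    · exact ⟨none, by simp, hx⟩
    · refine ⟨some (s - x), fun h => hx ?_, by simp [edgeClass]⟩
      rw [Option.some.injEq] at h
      linear_combination h

def classGraph (S : Set R) : SimpleGraph (Option R) where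
  Adj a b := a ≠ b ∧ edgeClass a b ∈ S
  symm := ⟨fun a b h => ⟨h.1.symm, edgeClass_comm (R := R) b a ▸ h.2⟩⟩

@[simp]
theorem classGraph_adj {S : Set R} {a b : Option R} :
    (classGraph S).Adj a b ↔ a ≠ b ∧ edgeClass a b ∈ S := Iff.rfl

theorem disjoint_edgeSet_classGraph {S T : Set R} (h : Disjoint S T) :
    Disjoint (classGraph S).edgeSet (classGraph T).edgeSet := by
  refine Set.disjoint_left.mpr fun d hS hT => ?_
  induction d using Sym2.ind with
  | _ a b => exact Set.disjoint_left.mp h hS.2 hT.2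

theorem classGraph_union (S T : Set R) : classGraph (S ∪ T) = classGraph S ⊔ classGraph T := by
  ext a b
  simp [and_or_left]

theorem classGraph_iUnion {ι : Type*} (S : ι → Set R) :
    classGraph (⋃ i, S i) = ⨆ i, classGraph (S i) := by
  ext a b
  simp [exists_and_left]

theorem classGraph_univ : classGraph (Set.univ : Set R) = ⊤ := by
  ext a b
  simp

theorem ncard_neighborSet_classGraph_singleton (h2 : IsUnit (2 : R)) (s : R) (a : Option R) :
    ((classGraph {s}).neighborSet a).ncard = 1 := by
  obtain ⟨b, hab, hs⟩ := exists_edgeClass_eq h2 a s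
  rw [Set.ncard_eq_one]
  refine ⟨b, Set.ext fun c => ⟨fun ⟨hac, hc⟩ => ?_, ?_⟩⟩
  · exact eq_of_edgeClass_eq h2 hac hab (hc.trans hs.symm)
  · rintro rfl
    exact ⟨hab, hs⟩

variable {t : ℕ}

def waleckiVertex (k : ZMod (2 * t + 1)) (n : ℕ) : Option (ZMod (2 * t + 1)) :=
  if n = 0 then none else if Even n then some (k + (n / 2 : ℕ)) else some (k - (n / 2 : ℕ))

variable (k : ZMod (2 * t + 1))

@[simp] theorem waleckiVertex_zero : waleckiVertex k 0 = none := rfl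

theorem waleckiVertex_two_mul_add_one (j : ℕ) :
    waleckiVertex k (2 * j + 1) = some (k - j) := by
  simp [waleckiVertex, show (2 * j + 1) / 2 = j by omega]

theorem waleckiVertex_two_mul {j : ℕ} (hj : j ≠ 0) :
    waleckiVertex k (2 * j) = some (k + j) := by
  simp [waleckiVertex, hj]

theorem two_mul_natCast_eq_neg_one : 2 * (t : ZMod (2 * t + 1)) = -1 := by
  have h := ZMod.natCast_self (2 * t + 1)
  push_cast at h
  linear_combination h

theorem edgeClass_waleckiVertex_succ {n : ℕ} (hn : n < 2 * t + 1) :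
    edgeClass (waleckiVertex k n) (waleckiVertex k (n + 1)) = 2 * k + (n % 2 : ℕ) := by
  obtain ⟨j, rfl | rfl⟩ := Nat.even_or_odd' n
  · rcases eq_or_ne j 0 with rfl | hj
    · rw [waleckiVertex_two_mul_add_one]
      simp [edgeClass]
    · rw [waleckiVertex_two_mul k hj, waleckiVertex_two_mul_add_one]
      simp only [edgeClass, Nat.mul_mod_right, Nat.cast_zero]
      ring
  · rw [waleckiVertex_two_mul_add_one, show 2 * j + 1 + 1 = 2 * (j + 1) by ring,
      waleckiVertex_two_mul k (by omega), show (2 * j + 1) % 2 = 1 by omega]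
    simp only [edgeClass, Nat.cast_add, Nat.cast_one]
    ring

theorem edgeClass_waleckiVertex_last :
    edgeClass (waleckiVertex k (2 * t + 1)) (waleckiVertex k 0) = 2 * k + 1 := by
  rw [waleckiVertex_two_mul_add_one, waleckiVertex_zero]
  show 2 * (k - t) = _
  linear_combination (-1 : ZMod (2 * t + 1)) * two_mul_natCast_eq_neg_one (t := t)

theorem isUnit_two : IsUnit (2 : ZMod (2 * t + 1)) := by
  have h := (ZMod.isUnit_iff_coprime 2 (2 * t + 1)).mpr
    (Nat.coprime_two_left.mpr (odd_two_mul_add_one t))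
  exact_mod_cast h

theorem edgeClass_waleckiVertex_add_one (p : Fin (2 * t + 2)) :
    edgeClass (waleckiVertex k p) (waleckiVertex k ↑(p + 1)) = 2 * k + (p.val % 2 : ℕ) := by
  rw [Fin.val_add_one]
  split_ifs with hp
  · rw [hp, Fin.val_last, edgeClass_waleckiVertex_last]
    simp [Nat.add_mod]
  · exact edgeClass_waleckiVertex_succ k (by have := Fin.val_lt_last hp; omega)

theorem waleckiVertex_surjective :
    Surjective fun p : Fin (2 * t + 2) => waleckiVertex k p := by
  rintro (_ | x)
  · exact ⟨0, rfl⟩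
  by_cases he : (k - x).val ≤ t
  · refine ⟨⟨2 * (k - x).val + 1, by omega⟩, ?_⟩
    show waleckiVertex k (2 * _ + 1) = _
    rw [waleckiVertex_two_mul_add_one, ZMod.natCast_zmod_val, sub_sub_cancel]
  · have hkx : k - x ≠ 0 := fun h => he (by simp [h])
    have hlt := (k - x).val_lt
    have hd : (x - k).val + (k - x).val = 2 * t + 1 := by
      rw [← neg_sub, ZMod.neg_val, if_neg hkx]
      omega
    refine ⟨⟨2 * (x - k).val, by omega⟩, ?_⟩
    show waleckiVertex k (2 * _) = _
    rw [waleckiVertex_two_mul k (j := (x - k).val) (by omega), ZMod.natCast_zmod_val,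
      add_sub_cancel]

theorem waleckiVertex_bijective :
    Bijective fun p : Fin (2 * t + 2) => waleckiVertex k p :=
  (Fintype.bijective_iff_surjective_and_card _).mpr
    ⟨waleckiVertex_surjective k, by simp [ZMod.card]⟩

theorem exists_isHamiltonianCycle_classGraph (ht : 0 < t) :
    ∃ (u : Option (ZMod (2 * t + 1))) (c : (classGraph {2 * k, 2 * k + 1}).Walk u u),
      c.IsHamiltonianCycle ∧
        ∀ d ∈ (classGraph {2 * k, 2 * k + 1}).edgeSet, d ∈ c.edges := by
  set ρ : Fin (2 * t + 2) → Option (ZMod (2 * t + 1)) := fun p => waleckiVertex k p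
  have hρ : Bijective ρ := waleckiVertex_bijective k
  have hclass : ∀ p, edgeClass (ρ p) (ρ (p + 1)) = 2 * k + (p.val % 2 : ℕ) :=
    edgeClass_waleckiVertex_add_one k
  have hne : ∀ p : Fin (2 * t + 2), ρ p ≠ ρ (p + 1) := fun p => hρ.injective.ne (by simp)
  refine exists_isHamiltonianCycle_of_bijective (by omega) hρ
    (fun p => ⟨hne p, ?_⟩) fun d hd => ?_
  · rw [hclass]
    rcases Nat.mod_two_eq_zero_or_one p.val with h | h <;> simp [h]
  induction d using Sym2.ind with
  | _ a b =>
  obtain ⟨hab, hs⟩ : a ≠ b ∧ edgeClass a b ∈ ({2 * k, 2 * k + 1} : Set _) := hd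
  obtain ⟨p, rfl⟩ := hρ.surjective a
  -- The cycle edges at `ρ p` carry the two classes `2k` and `2k + 1`, and `ρ p` has only one
  -- neighbour of each class.
  have hprev := hclass (p - 1)
  have hpar := Fin.val_add_one_mod_two (p - 1)
  rw [sub_add_cancel, edgeClass_comm] at hprev
  rw [sub_add_cancel] at hpar
  have : edgeClass (ρ p) b = edgeClass (ρ p) (ρ (p - 1)) ∨
      edgeClass (ρ p) b = edgeClass (ρ p) (ρ (p + 1)) := by
    rw [hprev, hclass]
    rcases Nat.mod_two_eq_zero_or_one p.val with h | h
    · rw [show (p - 1).val % 2 = 1 by omega, h]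
      simpa [or_comm] using hs
    · rw [show (p - 1).val % 2 = 0 by omega, h]
      simpa using hs
  rcases this with h | h
  · refine ⟨p - 1, ?_⟩
    rw [eq_of_edgeClass_eq isUnit_two hab (by simpa using (hne (p - 1)).symm) h, Sym2.eq_swap,
      sub_add_cancel]
  · exact ⟨p, by rw [eq_of_edgeClass_eq isUnit_two hab (hne p) h]⟩

theorem mem_pair_iff_val_div_two {i : ℕ} (hi : i < t) (s : ZMod (2 * t + 1)) :
    s ∈ ({2 * (i : ZMod (2 * t + 1)), 2 * (i : ZMod (2 * t + 1)) + 1} : Set _) ↔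
      s.val / 2 = i := by
  have h0 : (2 * (i : ZMod (2 * t + 1))).val = 2 * i := by
    exact_mod_cast ZMod.val_cast_of_lt (n := 2 * t + 1) (a := 2 * i) (by omega)
  have h1 : (2 * (i : ZMod (2 * t + 1)) + 1).val = 2 * i + 1 := by
    exact_mod_cast ZMod.val_cast_of_lt (n := 2 * t + 1) (a := 2 * i + 1) (by omega)
  simp only [Set.mem_insert_iff, Set.mem_singleton_iff, ← (ZMod.val_injective _).eq_iff, h0, h1]
  omega

theorem eq_neg_one_iff_val_div_two (s : ZMod (2 * t + 1)) : s = -1 ↔ s.val / 2 = t := by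
  have h : (-1 : ZMod (2 * t + 1)).val = 2 * t := ZMod.val_neg_one _
  have := s.val_lt
  rw [← (ZMod.val_injective _).eq_iff, h]
  omega

theorem isHamiltonianMatchingDecomposition_classGraph (t : ℕ) :
    IsHamiltonianMatchingDecomposition
      (fun i : Fin t =>
        classGraph {2 * ((i : ℕ) : ZMod (2 * t + 1)), 2 * ((i : ℕ) : ZMod (2 * t + 1)) + 1})
      (classGraph {-1}) := by
  refine ⟨fun i => exists_isHamiltonianCycle_classGraph _ i.pos,
    fun x => ncard_neighborSet_classGraph_singleton isUnit_two _ _,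
    fun i j hij => disjoint_edgeSet_classGraph ?_, fun i => disjoint_edgeSet_classGraph ?_, ?_⟩
  · refine Set.disjoint_left.mpr fun s hi hj => hij (Fin.ext ?_)
    rw [mem_pair_iff_val_div_two i.isLt] at hi
    rw [mem_pair_iff_val_div_two j.isLt] at hj
    rw [← hi, hj]
  · rw [Set.disjoint_singleton_right, mem_pair_iff_val_div_two i.isLt,
      (eq_neg_one_iff_val_div_two (-1)).mp rfl]
    exact i.isLt.ne'
  · rw [← classGraph_iUnion, ← classGraph_union, ← classGraph_univ]
    congr 1
    refine Set.eq_univ_of_forall fun s => ?_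
    have := s.val_lt
    rcases (by omega : s.val / 2 = t ∨ s.val / 2 < t) with h | h
    · exact Or.inl ((eq_neg_one_iff_val_div_two s).mpr h)
    · exact Or.inr <| Set.mem_iUnion.mpr
        ⟨⟨s.val / 2, h⟩, (mem_pair_iff_val_div_two h s).mpr rfl⟩

end Walecki

/-- if `v` is even, then `K_v` decomposes into `(v-2)/2` Hamiltonian
cycles and one perfect matching. -/
theorem stmt_16 (v : ℕ) (hv : Even v) :
    ∃ (F : Fin ((v - 2) / 2) → SimpleGraph (Fin v)) (M : SimpleGraph (Fin v)),
      (∀ i, ∃ (u : Fin v) (c : (F i).Walk u u),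
        c.IsHamiltonianCycle ∧ ∀ e ∈ (F i).edgeSet, e ∈ c.edges) ∧
      (∀ x : Fin v, (M.neighborSet x).ncard = 1) ∧
      (∀ i j, i ≠ j → Disjoint ((F i).edgeSet) ((F j).edgeSet)) ∧
      (∀ i, Disjoint ((F i).edgeSet) M.edgeSet) ∧
      M ⊔ (⨆ i, F i) = (⊤ : SimpleGraph (Fin v)) := by
  obtain ⟨_ | t, rfl⟩ := hv
  · refine ⟨fun i => i.elim0, ⊥, fun i => i.elim0, fun x => x.elim0, fun i => i.elim0,
      fun i => i.elim0, ?_⟩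
    ext a
    exact a.elim0
  rw [show (t + 1 + (t + 1) - 2) / 2 = t by omega]
  have e : Fin (t + 1 + (t + 1)) ≃ Option (ZMod (2 * t + 1)) :=
    Fintype.equivOfCardEq (by rw [Fintype.card_fin, Fintype.card_option, ZMod.card]; omega)
  exact ⟨_, _, (Walecki.isHamiltonianMatchingDecomposition_classGraph t).comap e⟩
end
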